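/- There is a bijection between the set of 2-regular simple stacks on [n] with k arcs and the set of unlabelled linear trees (plane rooted trees) with n-k+1 vertices of which k+1 are internal (non-leaf). Consequently the number of 2-regular simple stacks on [n] with k arcs equals (1/k) C(n-k, k+1) C(n-k-1, k-1) for n, k ≥ 1. -/

import Mathlib

/-- A 2-regular simple stack on `[n]`: a set of arcs `(i,j)` with `1 ≤ i`, `j ≤ n`,
`j - i ≥ 2` (2-regular), every vertex of degree at most 1 (simple), and no two
arcs crossing (stack). -/
def IsStack (n : ℕ) (A : Finset (ℕ × ℕ)) : Prop :=
  (∀ p ∈ A, 1 ≤ p.1 ∧ p.2 ≤ n ∧ p.1 + 2 ≤ p.2) ∧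
  (∀ p ∈ A, ∀ q ∈ A, p ≠ q → p.1 ≠ q.1 ∧ p.1 ≠ q.2 ∧ p.2 ≠ q.1 ∧ p.2 ≠ q.2) ∧
  (∀ p ∈ A, ∀ q ∈ A, ¬(p.1 < q.1 ∧ q.1 < p.2 ∧ p.2 < q.2))

/-- An unlabelled linear (plane rooted) tree: a root with a linearly ordered list of
subtrees. -/
inductive PlaneTree where
  | node : List PlaneTree → PlaneTree

mutual
  /-- Number of vertices of a plane tree. -/
  def PlaneTree.size : PlaneTree → ℕ
    | .node l => 1 + PlaneTree.sizeList l
  def PlaneTree.sizeList : List PlaneTree → ℕ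
    | [] => 0
    | t :: ts => PlaneTree.size t + PlaneTree.sizeList ts
end

mutual
  /-- Number of internal (non-leaf) vertices of a plane tree. -/
  def PlaneTree.internal : PlaneTree → ℕ
    | .node [] => 0
    | .node (t :: ts) => 1 + PlaneTree.internalList (t :: ts)
  def PlaneTree.internalList : List PlaneTree → ℕ
    | [] => 0
    | t :: ts => PlaneTree.internal t + PlaneTree.internalList ts
end

open PlaneTree

theorem forest_induction (Q : List PlaneTree → Prop) (h0 : Q [])
    (h1 : ∀ cs ts, Q cs → Q ts → Q (PlaneTree.node cs :: ts)) : ∀ l, Q l := by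
  have key : ∀ n l, sizeList l ≤ n → Q l := by
    intro n
    induction n with
    | zero =>
      intro l hl
      cases l with
      | nil => exact h0
      | cons t ts =>
        cases t with
        | node cs => simp [sizeList, size] at hl
    | succ n ih =>
      intro l hl
      cases l with
      | nil => exact h0
      | cons t ts =>
        cases t with
        | node cs =>
          have h : sizeList (node cs :: ts) = 1 + sizeList cs + sizeList ts := by
            simp [sizeList, size]
          exact h1 cs ts (ih cs (by omega)) (ih ts (by omega))
  exact fun l => key (sizeList l) l le_rfl

def widthList : List PlaneTree → ℕ
  | [] => 0
  | .node [] :: ts => 1 + widthList ts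
  | .node (c :: cs) :: ts => 2 + widthList (c :: cs) + widthList ts

def forestArcs : ℕ → List PlaneTree → Finset (ℕ × ℕ)
  | _, [] => ∅
  | o, .node [] :: ts => forestArcs (o + 1) ts
  | o, .node (c :: cs) :: ts =>
      insert (o, o + 1 + widthList (c :: cs))
        (forestArcs (o + 1) (c :: cs) ∪ forestArcs (o + 2 + widthList (c :: cs)) ts)

theorem widthList_pos (t : PlaneTree) (ts : List PlaneTree) : 1 ≤ widthList (t :: ts) := by
  cases t with
  | node cs => cases cs <;> simp [widthList] <;> omega

theorem widthList_eq_zero {l : List PlaneTree} (h : widthList l = 0) : l = [] := by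
  cases l with
  | nil => rfl
  | cons t ts => have := widthList_pos t ts; omega

theorem width_size_internal : ∀ l, widthList l = sizeList l + internalList l := by
  refine forest_induction _ (by simp [widthList, sizeList, internalList]) ?_
  intro cs ts hcs hts
  cases cs with
  | nil => simp [widthList, sizeList, internalList, size, internal] at *; omega
  | cons c cs' =>
    simp [widthList, sizeList, internalList, size, internal] at *; omega

theorem sizeList_pos (t : PlaneTree) (ts : List PlaneTree) : 1 ≤ sizeList (t :: ts) := by
  cases t with
  | node cs => simp [sizeList, size]; omega

def Simple (A : Finset (ℕ × ℕ)) : Prop :=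
  ∀ p ∈ A, ∀ q ∈ A, p ≠ q → p.1 ≠ q.1 ∧ p.1 ≠ q.2 ∧ p.2 ≠ q.1 ∧ p.2 ≠ q.2

def NonCross (A : Finset (ℕ × ℕ)) : Prop :=
  ∀ p ∈ A, ∀ q ∈ A, ¬(p.1 < q.1 ∧ q.1 < p.2 ∧ p.2 < q.2)

theorem arcs_bounds : ∀ l : List PlaneTree, ∀ o p, p ∈ forestArcs o l →
    o ≤ p.1 ∧ p.1 + 2 ≤ p.2 ∧ p.2 + 1 ≤ o + widthList l := by
  refine forest_induction _ (by simp [forestArcs]) ?_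
  intro cs ts ihc iht o p hp
  cases cs with
  | nil =>
    rw [forestArcs] at hp
    have := iht (o + 1) p hp
    simp [widthList] at *
    omega
  | cons c cs' =>
    rw [forestArcs, Finset.mem_insert, Finset.mem_union] at hp
    have hW := widthList_pos c cs'
    rcases hp with h | h | h
    · subst h; simp [widthList]; omega
    · have := ihc (o + 1) p h
      simp [widthList] at *
      omega
    · have := iht (o + 2 + widthList (c :: cs')) p h
      simp [widthList] at *
      omega

theorem arcs_simple : ∀ l : List PlaneTree, ∀ o, Simple (forestArcs o l) := by
  refine forest_induction _ (by simp [Simple, forestArcs]) ?_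
  intro cs ts ihc iht o
  cases cs with
  | nil =>
    intro p hp q hq hne
    rw [forestArcs] at hp hq
    exact iht (o + 1) p hp q hq hne
  | cons c cs' =>
    intro p hp q hq hne
    rw [forestArcs, Finset.mem_insert, Finset.mem_union] at hp hq
    have hW := widthList_pos c cs'
    rcases hp with hp | hp | hp <;> rcases hq with hq | hq | hq
    · exact absurd (hp.trans hq.symm) hne
    · obtain ⟨b1, b2, b3⟩ := arcs_bounds _ _ _ hq
      subst hp; refine ⟨?_, ?_, ?_, ?_⟩ <;> dsimp only <;> omega
    · obtain ⟨b1, b2, b3⟩ := arcs_bounds _ _ _ hq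
      subst hp; refine ⟨?_, ?_, ?_, ?_⟩ <;> dsimp only <;> omega
    · obtain ⟨b1, b2, b3⟩ := arcs_bounds _ _ _ hp
      subst hq; refine ⟨?_, ?_, ?_, ?_⟩ <;> dsimp only <;> omega
    · exact ihc (o + 1) p hp q hq hne
    · obtain ⟨b1, b2, b3⟩ := arcs_bounds _ _ _ hp
      obtain ⟨c1, c2, c3⟩ := arcs_bounds _ _ _ hq
      refine ⟨?_, ?_, ?_, ?_⟩ <;> omega
    · obtain ⟨b1, b2, b3⟩ := arcs_bounds _ _ _ hp
      subst hq; refine ⟨?_, ?_, ?_, ?_⟩ <;> dsimp only <;> omega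
    · obtain ⟨b1, b2, b3⟩ := arcs_bounds _ _ _ hp
      obtain ⟨c1, c2, c3⟩ := arcs_bounds _ _ _ hq
      refine ⟨?_, ?_, ?_, ?_⟩ <;> omega
    · exact iht _ p hp q hq hne

theorem arcs_noncross : ∀ l : List PlaneTree, ∀ o, NonCross (forestArcs o l) := by
  refine forest_induction _ (by simp [NonCross, forestArcs]) ?_
  intro cs ts ihc iht o
  cases cs with
  | nil =>
    intro p hp q hq
    rw [forestArcs] at hp hq
    exact iht (o + 1) p hp q hq
  | cons c cs' =>
    intro p hp q hq
    rw [forestArcs, Finset.mem_insert, Finset.mem_union] at hp hq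
    have hW := widthList_pos c cs'
    rcases hp with hp | hp | hp <;> rcases hq with hq | hq | hq
    · subst hp; subst hq; dsimp only; omega
    · obtain ⟨b1, b2, b3⟩ := arcs_bounds _ _ _ hq
      subst hp; dsimp only; omega
    · obtain ⟨b1, b2, b3⟩ := arcs_bounds _ _ _ hq
      subst hp; dsimp only; omega
    · obtain ⟨b1, b2, b3⟩ := arcs_bounds _ _ _ hp
      subst hq; dsimp only; omega
    · exact ihc (o + 1) p hp q hq
    · obtain ⟨b1, b2, b3⟩ := arcs_bounds _ _ _ hp
      obtain ⟨c1, c2, c3⟩ := arcs_bounds _ _ _ hq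
      omega
    · obtain ⟨b1, b2, b3⟩ := arcs_bounds _ _ _ hp
      subst hq; dsimp only; omega
    · obtain ⟨b1, b2, b3⟩ := arcs_bounds _ _ _ hp
      obtain ⟨c1, c2, c3⟩ := arcs_bounds _ _ _ hq
      omega
    · exact iht _ p hp q hq

theorem arcs_card : ∀ l : List PlaneTree, ∀ o, (forestArcs o l).card = internalList l := by
  refine forest_induction _ (by simp [forestArcs, internalList]) ?_
  intro cs ts ihc iht o
  cases cs with
  | nil =>
    rw [forestArcs]
    simp [internalList, internal]
    exact iht (o + 1)
  | cons c cs' =>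
    rw [forestArcs]
    have hW := widthList_pos c cs'
    have hnm : (o, o + 1 + widthList (c :: cs')) ∉
        forestArcs (o + 1) (c :: cs') ∪ forestArcs (o + 2 + widthList (c :: cs')) ts := by
      rw [Finset.mem_union]
      rintro (h | h) <;> · obtain ⟨b1, b2, b3⟩ := arcs_bounds _ _ _ h; dsimp only at b1 b2 b3; omega
    have hdis : Disjoint (forestArcs (o + 1) (c :: cs'))
        (forestArcs (o + 2 + widthList (c :: cs')) ts) := by
      rw [Finset.disjoint_left]
      intro p hp hq
      obtain ⟨b1, b2, b3⟩ := arcs_bounds _ _ _ hp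
      obtain ⟨c1, c2, c3⟩ := arcs_bounds _ _ _ hq
      omega
    rw [Finset.card_insert_of_notMem hnm, Finset.card_union_of_disjoint hdis, ihc, iht]
    simp [internalList, internal]
    omega

theorem arcs_existsUnique (m : ℕ) : ∀ o A,
    (∀ p ∈ A, o ≤ p.1 ∧ p.1 + 2 ≤ p.2 ∧ p.2 + 1 ≤ o + m) → Simple A → NonCross A →
    ∃! l : List PlaneTree, widthList l = m ∧ forestArcs o l = A := by
  induction m using Nat.strong_induction_on with
  | _ m ih =>
  intro o A hb hs hnc
  rcases Nat.eq_zero_or_pos m with hm | hm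
  · subst hm
    have hA : A = ∅ := by
      rw [Finset.eq_empty_iff_forall_notMem]
      intro p hp
      have := hb p hp
      omega
    refine ⟨[], ⟨by rw [widthList], by rw [forestArcs, hA]⟩, ?_⟩
    intro l ⟨hw, _⟩
    exact widthList_eq_zero hw
  by_cases hj : ∃ j, (o, j) ∈ A
  · obtain ⟨j, hjA⟩ := hj
    obtain ⟨-, hj2, hj3⟩ := hb _ hjA
    dsimp only at hj2 hj3
    have hw1 : 1 ≤ j - o - 1 := by omega
    have hjeq : j = o + 1 + (j - o - 1) := by omega
    -- abbreviations
    generalize hW1 : j - o - 1 = w1 at hw1 hjeq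
    have hw2 : m = w1 + (m - w1 - 2) + 2 := by omega
    generalize hW2 : m - w1 - 2 = w2 at hw2
    classical
    set Ain := A.filter (fun p => o < p.1 ∧ p.2 < j) with hAin
    set Aout := A.filter (fun p => j < p.1) with hAout
    have hclass : ∀ p ∈ A, p = (o, j) ∨ p ∈ Ain ∨ p ∈ Aout := by
      intro p hp
      by_cases hpe : p = (o, j)
      · exact Or.inl hpe
      obtain ⟨hd1, hd2, hd3, hd4⟩ := hs p hp _ hjA hpe
      dsimp only at hd1 hd2 hd3 hd4
      obtain ⟨he1, he2, he3⟩ := hb p hp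
      by_cases hlt : p.1 < j
      · refine Or.inr (Or.inl ?_)
        rw [hAin, Finset.mem_filter]
        have hcr := hnc _ hjA p hp
        dsimp only at hcr
        refine ⟨hp, by omega, by omega⟩
      · refine Or.inr (Or.inr ?_)
        rw [hAout, Finset.mem_filter]
        exact ⟨hp, by omega⟩
    have hbin : ∀ p ∈ Ain, o + 1 ≤ p.1 ∧ p.1 + 2 ≤ p.2 ∧ p.2 + 1 ≤ (o + 1) + w1 := by
      intro p hp
      rw [hAin, Finset.mem_filter] at hp
      have := hb p hp.1
      omega
    have hbout : ∀ p ∈ Aout, (j + 1) ≤ p.1 ∧ p.1 + 2 ≤ p.2 ∧ p.2 + 1 ≤ (j + 1) + w2 := by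
      intro p hp
      rw [hAout, Finset.mem_filter] at hp
      have := hb p hp.1
      omega
    have hsin : Simple Ain := fun p hp q hq => hs p (Finset.filter_subset _ _ hp) q (Finset.filter_subset _ _ hq)
    have hsout : Simple Aout := fun p hp q hq => hs p (Finset.filter_subset _ _ hp) q (Finset.filter_subset _ _ hq)
    have hnin : NonCross Ain := fun p hp q hq => hnc p (Finset.filter_subset _ _ hp) q (Finset.filter_subset _ _ hq)
    have hnout : NonCross Aout := fun p hp q hq => hnc p (Finset.filter_subset _ _ hp) q (Finset.filter_subset _ _ hq)
    obtain ⟨lin, ⟨hlinw, hlina⟩, huin⟩ := ih w1 (by omega) (o + 1) Ain hbin hsin hnin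
    obtain ⟨lout, ⟨hloutw, hlouta⟩, huout⟩ := ih w2 (by omega) (j + 1) Aout hbout hsout hnout
    have hlinne : lin ≠ [] := by
      intro h
      rw [h] at hlinw
      simp [widthList] at hlinw
      omega
    obtain ⟨c0, cs0, rfl⟩ : ∃ c0 cs0, lin = c0 :: cs0 := by
      cases lin with
      | nil => exact absurd rfl hlinne
      | cons a b => exact ⟨a, b, rfl⟩
    obtain ⟨cc⟩ := c0  -- c0 = node cc
    have harc : forestArcs o (node (node cc :: cs0) :: lout) = A := by
      rw [forestArcs, hlinw, hlina]
      have hoj : o + 1 + w1 = j := by omega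
      have hout2 : o + 2 + w1 = j + 1 := by omega
      rw [hoj, hout2, hlouta]
      apply Finset.Subset.antisymm
      · intro p hp
        rw [Finset.mem_insert, Finset.mem_union] at hp
        rcases hp with rfl | hp | hp
        · exact hjA
        · exact Finset.filter_subset _ _ hp
        · exact Finset.filter_subset _ _ hp
      · intro p hp
        rw [Finset.mem_insert, Finset.mem_union]
        rcases hclass p hp with h | h | h
        · exact Or.inl h
        · exact Or.inr (Or.inl h)
        · exact Or.inr (Or.inr h)
    refine ⟨node (node cc :: cs0) :: lout, ⟨?_, harc⟩, ?_⟩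
    · rw [widthList, hlinw, hloutw]; omega
    · rintro l ⟨hlw, hla⟩
      cases l with
      | nil => simp [widthList] at hlw; omega
      | cons t ts =>
        obtain ⟨cs⟩ := t
        cases cs with
        | nil =>
          exfalso
          rw [forestArcs] at hla
          rw [← hla] at hjA
          have := arcs_bounds _ _ _ hjA
          dsimp only at this
          omega
        | cons c1 cs1 =>
          rw [forestArcs] at hla
          rw [widthList] at hlw
          have hmem : (o, o + 1 + widthList (c1 :: cs1)) ∈ A := by
            rw [← hla]; exact Finset.mem_insert_self _ _
          have hWeq : o + 1 + widthList (c1 :: cs1) = j := by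
            by_contra hne
            have := hs _ hmem _ hjA (by
              intro h
              exact hne (congrArg Prod.snd h))
            dsimp only at this
            exact this.1 rfl
          have hW1' : widthList (c1 :: cs1) = w1 := by omega
          have hBsub : forestArcs (o + 1) (c1 :: cs1) = Ain := by
            apply Finset.Subset.antisymm
            · intro p hp
              have hbp := arcs_bounds _ _ _ hp
              rw [hAin, Finset.mem_filter]
              refine ⟨?_, by omega, by omega⟩
              rw [← hla, Finset.mem_insert, Finset.mem_union]
              exact Or.inr (Or.inl hp)
            · intro p hp
              have hmf := hbin p hp
              rw [hAin, Finset.mem_filter] at hp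
              have hpA := hp.1
              rw [← hla, Finset.mem_insert, Finset.mem_union] at hpA
              rcases hpA with rfl | h | h
              · exfalso; dsimp only at hmf; omega
              · exact h
              · exfalso
                have := arcs_bounds _ _ _ h
                omega
          have hCsub : forestArcs (o + 2 + widthList (c1 :: cs1)) ts = Aout := by
            apply Finset.Subset.antisymm
            · intro p hp
              have hbp := arcs_bounds _ _ _ hp
              rw [hAout, Finset.mem_filter]
              refine ⟨?_, by omega⟩
              rw [← hla, Finset.mem_insert, Finset.mem_union]
              exact Or.inr (Or.inr hp)
            · intro p hp
              have hmf := hbout p hp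
              rw [hAout, Finset.mem_filter] at hp
              have hpA := hp.1
              rw [← hla, Finset.mem_insert, Finset.mem_union] at hpA
              rcases hpA with rfl | h | h
              · exfalso; dsimp only at hmf; omega
              · exfalso
                have := arcs_bounds _ _ _ h
                omega
              · exact h
          have hts : widthList ts = w2 := by omega
          have e1 : c1 :: cs1 = node cc :: cs0 := by
            apply huin
            exact ⟨by omega, hBsub⟩
          have e2 : ts = lout := by
            apply huout
            constructor
            · exact hts
            · rw [← hCsub, hW1']
              congr 1
              omega
          rw [e1, e2]
  · have hb' : ∀ p ∈ A, (o + 1) ≤ p.1 ∧ p.1 + 2 ≤ p.2 ∧ p.2 + 1 ≤ (o + 1) + (m - 1) := by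
      intro p hp
      have h1 := hb p hp
      have h2 : p.1 ≠ o := by
        intro h
        apply hj
        refine ⟨p.2, ?_⟩
        have : (p.1, p.2) = p := rfl
        rw [← this, h] at hp ⊢
        exact hp
      omega
    obtain ⟨l', ⟨hl'w, hl'a⟩, hu'⟩ := ih (m - 1) (by omega) (o + 1) A hb' hs hnc
    refine ⟨node [] :: l', ⟨?_, ?_⟩, ?_⟩
    · rw [widthList, hl'w]; omega
    · rw [forestArcs]; exact hl'a
    · rintro l ⟨hlw, hla⟩
      cases l with
      | nil => simp [widthList] at hlw; omega
      | cons t ts =>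
        obtain ⟨cs⟩ := t
        cases cs with
        | nil =>
          have : ts = l' := by
            apply hu'
            rw [widthList] at hlw
            rw [forestArcs] at hla
            exact ⟨by omega, hla⟩
          rw [this]
        | cons c1 cs1 =>
          exfalso
          apply hj
          refine ⟨o + 1 + widthList (c1 :: cs1), ?_⟩
          rw [← hla, forestArcs]
          exact Finset.mem_insert_self _ _

theorem isStack_iff (n : ℕ) (A : Finset (ℕ × ℕ)) :
    IsStack n A ↔ (∀ p ∈ A, 1 ≤ p.1 ∧ p.1 + 2 ≤ p.2 ∧ p.2 + 1 ≤ 1 + n) ∧ Simple A ∧ NonCross A := by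
  constructor
  · rintro ⟨h1, h2, h3⟩
    exact ⟨fun p hp => by have := h1 p hp; omega, h2, h3⟩
  · rintro ⟨h1, h2, h3⟩
    exact ⟨fun p hp => by have := h1 p hp; omega, h2, h3⟩

noncomputable def stackEquiv (n k : ℕ) :
    {l : List PlaneTree // widthList l = n ∧ internalList l = k} ≃
      {A : Finset (ℕ × ℕ) // IsStack n A ∧ A.card = k} := by
  apply Equiv.ofBijective (fun x => ⟨forestArcs 1 x.1, by
    rw [isStack_iff]
    refine ⟨⟨fun p hp => by have := arcs_bounds _ _ _ hp; rw [x.2.1] at this; omega,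
      arcs_simple _ _, arcs_noncross _ _⟩, ?_⟩
    rw [arcs_card, x.2.2]⟩)
  constructor
  · rintro ⟨a, ha1, ha2⟩ ⟨b, hb1, hb2⟩ hab
    simp only [Subtype.mk.injEq] at hab ⊢
    obtain ⟨l, -, hu⟩ := arcs_existsUnique n 1 (forestArcs 1 a)
      (fun p hp => by have := arcs_bounds _ _ _ hp; rw [ha1] at this; omega)
      (arcs_simple _ _) (arcs_noncross _ _)
    have e1 := hu a ⟨ha1, rfl⟩
    have e2 := hu b ⟨hb1, hab.symm⟩
    rw [e1, e2]
  · rintro ⟨A, hA, hk⟩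
    rw [isStack_iff] at hA
    obtain ⟨h1, h2, h3⟩ := hA
    obtain ⟨l, ⟨hw, ha⟩, -⟩ := arcs_existsUnique n 1 A (fun p hp => by have := h1 p hp; omega) h2 h3
    refine ⟨⟨l, hw, ?_⟩, ?_⟩
    · rw [← arcs_card l 1, ha, hk]
    · exact Subtype.ext ha

def PlaneTree.children : PlaneTree → List PlaneTree
  | node l => l

theorem node_children (T : PlaneTree) : node T.children = T := by
  cases T; rfl

theorem fw_aux (n k : ℕ) (hn : 1 ≤ n) (l : List PlaneTree)
    (h1 : widthList l = n) (h2 : internalList l = k) :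
    (PlaneTree.node l).size = n - k + 1 ∧ (PlaneTree.node l).internal = k + 1 := by
  have hw := width_size_internal l
  obtain ⟨t, ts, rfl⟩ : ∃ t ts, l = t :: ts := by
    cases l with
    | nil => simp [widthList] at h1; omega
    | cons t ts => exact ⟨t, ts, rfl⟩
  constructor
  · rw [size]; omega
  · rw [internal, h2]; omega

theorem bw_aux (n k : ℕ) (hn : 1 ≤ n) (hk : 1 ≤ k) (T : PlaneTree)
    (h1 : T.size = n - k + 1) (h2 : T.internal = k + 1) :
    widthList T.children = n ∧ internalList T.children = k := by
  obtain ⟨l⟩ := T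
  have hw := width_size_internal l
  rw [size] at h1
  obtain ⟨t, ts, rfl⟩ : ∃ t ts, l = t :: ts := by
    cases l with
    | nil => rw [internal] at h2; omega
    | cons t ts => exact ⟨t, ts, rfl⟩
  rw [internal] at h2
  have hsz := sizeList_pos t ts
  simp only [children]
  omega

def forestTreeEquiv (n k : ℕ) (hn : 1 ≤ n) (hk : 1 ≤ k) :
    {l : List PlaneTree // widthList l = n ∧ internalList l = k} ≃
      {T : PlaneTree // T.size = n - k + 1 ∧ T.internal = k + 1} where
  toFun x := ⟨node x.1, fw_aux n k hn x.1 x.2.1 x.2.2⟩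
  invFun x := ⟨x.1.children, bw_aux n k hn hk x.1 x.2.1 x.2.2⟩
  left_inv x := rfl
  right_inv x := Subtype.ext (node_children x.1)

def codeList : List PlaneTree → List ℕ
  | [] => []
  | .node cs :: ts => cs.length :: (codeList cs ++ codeList ts)

theorem code_length : ∀ l, (codeList l).length = sizeList l := by
  refine forest_induction _ (by simp [codeList, sizeList]) ?_
  intro cs ts ihc iht
  simp [codeList, sizeList, size, ihc, iht]
  omega

theorem code_sum : ∀ l : List PlaneTree, l.length + (codeList l).sum = (codeList l).length := by
  refine forest_induction _ (by simp [codeList]) ?_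
  intro cs ts ihc iht
  simp [codeList] at *
  omega

theorem code_countP : ∀ l : List PlaneTree,
    (codeList l).countP (fun c => c != 0) = internalList l := by
  refine forest_induction _ (by simp [codeList, internalList]) ?_
  intro cs ts ihc iht
  rw [codeList, List.countP_cons, List.countP_append, ihc, iht]
  cases cs with
  | nil => simp [internalList, internal, codeList]
  | cons c cs' => simp [internalList, internal]; omega

theorem code_good : ∀ l : List PlaneTree, ∀ p < (codeList l).length,
    p + 1 ≤ l.length + ((codeList l).take p).sum := by
  refine forest_induction _ (by simp [codeList]) ?_
  intro cs ts ihc iht p hp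
  rw [codeList] at hp ⊢
  cases p with
  | zero => simp
  | succ p' =>
    rw [List.take_succ_cons, List.sum_cons, List.take_append, List.sum_append]
    simp only [List.length_cons, List.length_append] at hp
    by_cases hc : p' < (codeList cs).length
    · have h1 := ihc p' hc
      have : p' - (codeList cs).length = 0 := by omega
      rw [this]
      simp only [List.take_zero, List.sum_nil, List.length_cons]
      have hmono : ((codeList cs).take p').sum ≤ ((codeList cs).take p').sum := le_rfl
      have := code_sum cs
      omega
    · push_neg at hc
      rw [List.take_of_length_le hc]
      have h2 := code_sum cs
      have hlt : p' - (codeList cs).length < (codeList ts).length := by omega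
      have h3 := iht _ hlt
      simp only [List.length_cons]
      omega

theorem exists_fix (f : ℕ → ℕ) (hmono : ∀ q, f q ≤ f (q + 1)) :
    ∀ N, f N ≤ N → ∃ q, q ≤ N ∧ f q = q := by
  intro N
  induction N with
  | zero => intro h; exact ⟨0, le_rfl, by omega⟩
  | succ N ihN =>
    intro h
    by_cases hN : f N ≤ N
    · obtain ⟨q, hq1, hq2⟩ := ihN hN
      exact ⟨q, by omega, hq2⟩
    · exact ⟨N + 1, le_rfl, by have := hmono N; omega⟩

theorem take_sum_mono (s : List ℕ) (q : ℕ) : (s.take q).sum ≤ (s.take (q + 1)).sum := by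
  rw [List.take_add (l := s) (i := q) (j := 1), List.sum_append]
  omega

theorem code_existsUnique (m : ℕ) : ∀ j s, s.length = m → j + s.sum = m →
    (∀ p < m, p + 1 ≤ j + (s.take p).sum) →
    ∃! l : List PlaneTree, l.length = j ∧ codeList l = s := by
  induction m using Nat.strong_induction_on with
  | _ m ih =>
  intro j s hlen hsum hgood
  rcases Nat.eq_zero_or_pos m with hm | hm
  · subst hm
    have hs : s = [] := List.length_eq_zero_iff.mp hlen
    rw [hs] at hsum
    simp only [List.sum_nil, Nat.add_zero] at hsum
    refine ⟨[], ⟨by simp [hsum], by rw [hs, codeList]⟩, ?_⟩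
    rintro l ⟨hl, -⟩
    rw [← List.length_eq_zero_iff, hl, hsum]
  have hj : 1 ≤ j := by
    have := hgood 0 hm
    simpa using this
  obtain ⟨c, rest, rfl⟩ : ∃ c rest, s = c :: rest := by
    cases s with
    | nil => simp at hlen; omega
    | cons c rest => exact ⟨c, rest, rfl⟩
  simp only [List.length_cons, List.sum_cons] at hlen hsum
  classical
  have hmono : ∀ q, (fun q => c + (rest.take q).sum) q ≤ (fun q => c + (rest.take q).sum) (q + 1) := by
    intro q
    have := take_sum_mono rest q
    simp only
    omega
  have hwit : ∃ q, c + (rest.take q).sum = q := by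
    obtain ⟨q, hq1, hq2⟩ := exists_fix (fun q => c + (rest.take q).sum) hmono rest.length
      (by show c + (rest.take rest.length).sum ≤ rest.length; rw [List.take_length]; omega)
    exact ⟨q, hq2⟩
  set q := Nat.find hwit with hqdef
  have hfix : c + (rest.take q).sum = q := Nat.find_spec hwit
  have hqN : q ≤ rest.length := by
    obtain ⟨q', hq1, hq2⟩ := exists_fix (fun q => c + (rest.take q).sum) hmono rest.length
      (by show c + (rest.take rest.length).sum ≤ rest.length; rw [List.take_length]; omega)
    exact le_trans (Nat.find_min' hwit hq2) hq1
  have hneg : ∀ p, p < q → p + 1 ≤ c + (rest.take p).sum := by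
    intro p
    induction p with
    | zero =>
      intro hp
      have := Nat.find_min hwit hp
      simp only [List.take_zero, List.sum_nil] at this ⊢
      omega
    | succ p ihp =>
      intro hp
      have h1 := ihp (by omega)
      have h2 := Nat.find_min hwit hp
      have h3 := take_sum_mono rest p
      omega
  -- inner forest
  have hinner := ih q (by omega) c (rest.take q)
    (by rw [List.length_take]; omega) (by omega)
    (by
      intro p hp
      rw [List.take_take]
      have : min p q = p := by omega
      rw [this]
      exact hneg p hp)
  -- outer forest
  have hdropsum : (rest.take q).sum + (rest.drop q).sum = rest.sum := by
    conv_rhs => rw [← List.take_append_drop q rest]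
    rw [List.sum_append]
  have houter := ih (m - 1 - q) (by omega) (j - 1) (rest.drop q)
    (by rw [List.length_drop]; omega) (by omega)
    (by
      intro p hp
      have hg := hgood (1 + q + p) (by omega)
      have he : 1 + q + p = (q + p) + 1 := by omega
      rw [he, List.take_succ_cons, List.take_add, List.sum_cons, List.sum_append] at hg
      omega)
  obtain ⟨lin, ⟨hlin1, hlin2⟩, huin⟩ := hinner
  obtain ⟨lout, ⟨hlout1, hlout2⟩, huout⟩ := houter
  refine ⟨node lin :: lout, ⟨?_, ?_⟩, ?_⟩
  · simp only [List.length_cons]; omega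
  · rw [codeList, hlin1, hlin2, hlout2, List.take_append_drop]
  · rintro l ⟨hl1, hl2⟩
    cases l with
    | nil => rw [codeList] at hl2; exact absurd hl2 (by simp)
    | cons t ts =>
      obtain ⟨cs⟩ := t
      rw [codeList] at hl2
      have hc : cs.length = c := by injection hl2
      have hrest : codeList cs ++ codeList ts = rest := by injection hl2
      have hq' : (codeList cs).length = q := by
        have hP : c + (rest.take (codeList cs).length).sum = (codeList cs).length := by
          rw [← hrest, List.take_left, ← hc]
          exact code_sum cs
        have hle : q ≤ (codeList cs).length := Nat.find_min' hwit hP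
        by_contra hne
        have hlt : q < (codeList cs).length := by omega
        have hg := code_good cs q hlt
        have : (rest.take q) = (codeList cs).take q := by
          rw [← hrest, List.take_append]
          have : q - (codeList cs).length = 0 := by omega
          rw [this]
          simp
        rw [this] at hfix
        omega
      have hcs : cs = lin := by
        apply huin
        refine ⟨hc, ?_⟩
        rw [← hrest, ← hq', List.take_left]
      have hts : ts = lout := by
        apply huout
        constructor
        · simp only [List.length_cons] at hl1; omega
        · rw [← hrest, ← hq', List.drop_left]
      rw [hcs, hts]

def SeqCond (v i : ℕ) (s : List ℕ) : Prop :=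
  s.length = v ∧ s.sum + 1 = v ∧ (∀ p < s.length, p ≤ (s.take p).sum) ∧
    s.countP (fun c => c != 0) = i

theorem sizeList_single (t : PlaneTree) : sizeList [t] = t.size := by
  rw [sizeList, sizeList]; omega

theorem internalList_single (t : PlaneTree) : internalList [t] = t.internal := by
  rw [internalList, internalList]; omega

theorem seq_of_tree (v i : ℕ) (T : PlaneTree) (h1 : T.size = v) (h2 : T.internal = i) :
    SeqCond v i (codeList [T]) := by
  have hl := code_length [T]
  have hs := code_sum [T]
  have hg := code_good [T]
  have hc := code_countP [T]
  rw [sizeList_single, h1] at hl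
  rw [internalList_single, h2] at hc
  refine ⟨hl, by simp only [List.length_singleton] at hs; omega, ?_, hc⟩
  intro p hp
  have := hg p hp
  simp only [List.length_singleton] at this
  omega

noncomputable def treeSeqEquiv (v i : ℕ) :
    {T : PlaneTree // T.size = v ∧ T.internal = i} ≃ {s : List ℕ // SeqCond v i s} := by
  apply Equiv.ofBijective (fun T => ⟨codeList [T.1], seq_of_tree v i T.1 T.2.1 T.2.2⟩)
  constructor
  · rintro ⟨T, hT⟩ ⟨T', hT'⟩ h
    simp only [Subtype.mk.injEq] at h ⊢
    have hsum := code_sum [T]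
    have hgood := code_good [T]
    obtain ⟨l, -, hu⟩ := code_existsUnique (codeList [T]).length 1 (codeList [T]) rfl
      (by simpa using hsum) (by intro p hp; have := hgood p hp; simpa using this)
    have e1 := hu [T] ⟨rfl, rfl⟩
    have e2 := hu [T'] ⟨rfl, h.symm⟩
    have e3 : [T] = [T'] := e1.trans e2.symm
    exact (List.cons.inj e3).1
  · rintro ⟨s, h1, h2, h3, h4⟩
    obtain ⟨l, ⟨hl1, hl2⟩, -⟩ := code_existsUnique v 1 s h1 (by omega)
      (by intro p hp; have := h3 p (by omega); omega)
    obtain ⟨t, rfl⟩ : ∃ t, l = [t] := by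
      cases l with
      | nil => simp at hl1
      | cons a b =>
        cases b with
        | nil => exact ⟨a, rfl⟩
        | cons x y => simp at hl1
    refine ⟨⟨t, ?_, ?_⟩, Subtype.ext hl2⟩
    · rw [← sizeList_single, ← code_length, hl2, h1]
    · rw [← internalList_single, ← code_countP, hl2, h4]

def AllCond (v i : ℕ) (s : List ℕ) : Prop :=
  s.length = v ∧ s.sum + 1 = v ∧ s.countP (fun c => c != 0) = i

theorem rot_take_low (s : List ℕ) (r p : ℕ) (hr : r ≤ s.length) (hp : p ≤ s.length - r) :
    (s.take r).sum + ((s.rotate r).take p).sum = (s.take (r + p)).sum := by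
  rw [List.rotate_eq_drop_append_take hr,
    List.take_append_of_le_length (by rw [List.length_drop]; omega),
    List.take_add, List.sum_append]

theorem rot_take_high (s : List ℕ) (r p : ℕ) (hr : r ≤ s.length) (hp : s.length - r ≤ p)
    (hp2 : p ≤ s.length) :
    (s.take r).sum + ((s.rotate r).take p).sum = s.sum + (s.take (p - (s.length - r))).sum := by
  have h1 : (s.rotate r).take p = s.drop r ++ s.take (p - (s.length - r)) := by
    rw [List.rotate_eq_drop_append_take hr, List.take_append]
    rw [List.take_of_length_le (l := s.drop r) (by rw [List.length_drop]; omega)]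
    rw [List.take_take, List.length_drop]
    congr 2
    omega
  rw [h1, List.sum_append]
  have hds : (s.take r).sum + (s.drop r).sum = s.sum := by
    conv_rhs => rw [← List.take_append_drop r s]
    rw [List.sum_append]
  omega

def Dfun (s : List ℕ) (p : ℕ) : ℤ := (p : ℤ) - ((s.take p).sum : ℤ)

theorem rot_good_unique (g : List ℕ) (hlen : 1 ≤ g.length) (hsum : g.sum + 1 = g.length)
    (hg : ∀ p < g.length, p ≤ (g.take p).sum) (t : ℕ) (ht : t < g.length)
    (hg' : ∀ p < g.length, p ≤ ((g.rotate t).take p).sum) : t = 0 := by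
  by_contra hne
  have ht1 : 1 ≤ t := by omega
  have h1 := hg' (g.length - t) (by omega)
  have h2 := rot_take_low g t (g.length - t) (by omega) (by omega)
  have h3 : t + (g.length - t) = g.length := by omega
  rw [h3, List.take_length] at h2
  have h4 := hg t ht
  omega

theorem rot_good_exists (s : List ℕ) (hlen : 1 ≤ s.length) (hsum : s.sum + 1 = s.length) :
    ∃ r < s.length, ∀ p < s.length, p ≤ ((s.rotate r).take p).sum := by
  classical
  have hne : ((Finset.range (s.length + 1)).image (Dfun s)).Nonempty :=
    Finset.image_nonempty.mpr ⟨0, Finset.mem_range.mpr (by omega)⟩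
  set M := ((Finset.range (s.length + 1)).image (Dfun s)).max' hne with hM
  have hle : ∀ p ≤ s.length, Dfun s p ≤ M := fun p hp =>
    Finset.le_max' _ _ (Finset.mem_image_of_mem (Dfun s) (Finset.mem_range.mpr (by omega)))
  have hex : ∃ p, p ≤ s.length ∧ Dfun s p = M := by
    obtain ⟨p, hp, hpe⟩ := Finset.mem_image.mp (((Finset.range (s.length + 1)).image (Dfun s)).max'_mem hne)
    exact ⟨p, by rw [Finset.mem_range] at hp; omega, hpe⟩
  obtain ⟨hq0v, hq0M⟩ := Nat.find_spec hex
  set q0 := Nat.find hex with hq0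
  have hmin : ∀ p < q0, p ≤ s.length → Dfun s p ≠ M := by
    intro p hp hpv
    have := Nat.find_min hex hp
    tauto
  have hDv : Dfun s s.length = 1 := by
    rw [Dfun, List.take_length]
    omega
  by_cases hq0v' : q0 = s.length
  · refine ⟨0, by omega, ?_⟩
    intro p hp
    rw [List.rotate_zero]
    have hDp : Dfun s p ≤ M := hle p (by omega)
    have hDpne : Dfun s p ≠ M := hmin p (by omega) (by omega)
    have hM1 : M = 1 := by rw [← hq0M, hq0v', hDv]
    rw [Dfun] at hDp hDpne
    omega
  · refine ⟨q0, by omega, ?_⟩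
    intro p hp
    by_cases hcase : p ≤ s.length - q0
    · have h2 := rot_take_low s q0 p (by omega) (by omega)
      have hD2 : Dfun s (q0 + p) ≤ M := hle (q0 + p) (by omega)
      rw [Dfun] at hD2
      rw [Dfun] at hq0M
      omega
    · have h2 := rot_take_high s q0 p (by omega) (by omega) (by omega)
      have hD3 : Dfun s (p - (s.length - q0)) ≠ M := hmin _ (by omega) (by omega)
      have hD4 : Dfun s (p - (s.length - q0)) ≤ M := hle _ (by omega)
      rw [Dfun] at hD3 hD4
      rw [Dfun] at hq0M
      omega

noncomputable def cycleEquiv (v i : ℕ) (hv : 1 ≤ v) :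
    ({s : List ℕ // SeqCond v i s} × Fin v) ≃ {s : List ℕ // AllCond v i s} := by
  apply Equiv.ofBijective (fun x => ⟨x.1.1.rotate x.2.1, by
    obtain ⟨⟨g, h1, h2, h3, h4⟩, r⟩ := x
    have hperm := List.rotate_perm g r.1
    exact ⟨by rw [List.length_rotate]; exact h1, by rw [hperm.sum_eq]; exact h2,
      by rw [hperm.countP_eq]; exact h4⟩⟩)
  constructor
  · rintro ⟨⟨g, hg1, hg2, hg3, hg4⟩, r, hr⟩ ⟨⟨g', hg1', hg2', hg3', hg4'⟩, r', hr'⟩ heq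
    simp only [Subtype.mk.injEq, Prod.mk.injEq, Fin.mk.injEq] at heq ⊢
    have E : g.rotate r = g'.rotate r' := heq
    have E2 : g.rotate (r + (v - r')) = g'.rotate (r' + (v - r')) := by
      rw [← List.rotate_rotate, ← List.rotate_rotate, E]
    have E2' : g'.rotate (r' + (v - r')) = g' := by
      have hrv : r' + (v - r') = v := by omega
      rw [hrv, ← hg1', List.rotate_length]
    have E4 : ∃ t0, t0 < v ∧ g' = g.rotate t0 ∧ (t0 = 0 → r = r') := by
      by_cases hch : r' ≤ r
      · refine ⟨r - r', by omega, ?_, by omega⟩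
        have h5 : r + (v - r') = v + (r - r') := by omega
        have E2L : g.rotate (r + (v - r')) = g.rotate (r - r') := by
          rw [h5, ← List.rotate_rotate, ← hg1, List.rotate_length]
        rw [← E2L, E2, E2']
      · refine ⟨r + (v - r'), by omega, ?_, by omega⟩
        rw [E2, E2']
    obtain ⟨t0, ht0v, ht0, himp⟩ := E4
    have ht00 : t0 = 0 := by
      apply rot_good_unique g (by omega) (by omega) (fun p hp => hg3 p hp) t0 (by omega)
      intro p hp
      rw [← ht0]
      exact hg3' p (by omega)
    have hrr' : r = r' := himp ht00
    rw [ht00, List.rotate_zero] at ht0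
    exact ⟨Subtype.ext ht0.symm, hrr'⟩
  · rintro ⟨s, h1, h2, h3⟩
    obtain ⟨r, hrv, hrgood⟩ := rot_good_exists s (by omega) (by omega)
    have hperm := List.rotate_perm s r
    refine ⟨⟨⟨s.rotate r, by rw [List.length_rotate]; exact h1, by rw [hperm.sum_eq]; exact h2,
      by intro p hp; rw [List.length_rotate] at hp; exact hrgood p (by omega),
      by rw [hperm.countP_eq]; exact h3⟩, ⟨if r = 0 then 0 else v - r, by
        split <;> omega⟩⟩, ?_⟩
    apply Subtype.ext
    simp only
    by_cases hr0 : r = 0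
    · rw [if_pos hr0, hr0, List.rotate_zero, List.rotate_zero]
    · rw [if_neg hr0, List.rotate_rotate]
      have : r + (v - r) = v := by omega
      rw [this, ← h1, List.rotate_length]

def CntCond (v t i : ℕ) (s : List ℕ) : Prop :=
  s.length = v ∧ s.sum = t ∧ s.countP (fun c => c != 0) = i

theorem cnt_finite (v t i : ℕ) : Finite {s : List ℕ // CntCond v t i s} := by
  apply Finite.of_injective (β := Fin v → Fin (t + 1))
    (fun x j => ⟨x.1.get ⟨j.1, by rw [x.2.1]; exact j.2⟩, by
      have hmem := List.get_mem x.1 ⟨j.1, by rw [x.2.1]; exact j.2⟩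
      have hle := List.single_le_sum (l := x.1) (fun y _ => Nat.zero_le y) _ hmem
      have hsum := x.2.2.1
      omega⟩)
  rintro ⟨s, hs⟩ ⟨s', hs'⟩ h
  apply Subtype.ext
  apply List.ext_get (by rw [hs.1, hs'.1])
  intro n h1 h2
  have := congrFun h ⟨n, by rw [← hs.1]; exact h1⟩
  simpa using this

theorem cnt_card_zero (v t : ℕ) :
    Nat.card {s : List ℕ // CntCond v t 0 s} = if t = 0 then 1 else 0 := by
  rcases Nat.eq_zero_or_pos t with ht | ht
  · subst ht
    rw [if_pos rfl]
    haveI : Unique {s : List ℕ // CntCond v 0 0 s} := by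
      refine ⟨⟨⟨List.replicate v 0, ?_, ?_, ?_⟩⟩, ?_⟩
      · simp
      · simp
      · rw [List.countP_eq_zero]
        intro a ha
        rw [List.eq_of_mem_replicate ha]
        simp
      · rintro ⟨s, h1, h2, h3⟩
        apply Subtype.ext
        simp only
        rw [List.eq_replicate_iff]
        refine ⟨h1, ?_⟩
        rw [List.countP_eq_zero] at h3
        intro b hb
        have := h3 b hb
        simpa using this
    exact Nat.card_unique
  · rw [if_neg (by omega)]
    haveI : IsEmpty {s : List ℕ // CntCond v t 0 s} := by
      refine ⟨?_⟩
      rintro ⟨s, h1, h2, h3⟩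
      rw [List.countP_eq_zero] at h3
      have : s.sum = 0 := by
        rw [List.sum_eq_zero_iff]
        intro a ha
        have := h3 a ha
        simpa using this
      omega
    exact Nat.card_of_isEmpty

theorem nat_card_sigma {k : ℕ} (F : Fin k → Type) [hF : ∀ y, Finite (F y)] :
    Nat.card (Σ y, F y) = ∑ y, Nat.card (F y) := by
  letI : ∀ y, Fintype (F y) := fun y => Fintype.ofFinite _
  simp [Nat.card_eq_fintype_card, Fintype.card_sigma]

theorem hockey (j : ℕ) : ∀ m, ∑ u ∈ Finset.range m, u.choose j = m.choose (j + 1) := by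
  intro m
  induction m with
  | zero => simp
  | succ m ih =>
    rw [Finset.sum_range_succ, ih, Nat.choose_succ_succ']
    omega

theorem cnt_decomp (v t i : ℕ) :
    Nat.card {s : List ℕ // CntCond (v + 1) t (i + 1) s} =
      Nat.card {s : List ℕ // CntCond v t (i + 1) s} +
      ∑ y : Fin t, Nat.card {s : List ℕ // CntCond v (t - (y.1 + 1)) i s} := by
  haveI := cnt_finite (v + 1) t (i + 1)
  haveI := cnt_finite v t (i + 1)
  haveI : ∀ y : Fin t, Finite {s : List ℕ // CntCond v (t - (y.1 + 1)) i s} :=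
    fun y => cnt_finite _ _ _
  have Ψbij : Function.Bijective
      (fun x : ({s : List ℕ // CntCond v t (i + 1) s} ⊕
        (Σ y : Fin t, {s : List ℕ // CntCond v (t - (y.1 + 1)) i s})) =>
        (match x with
        | .inl ⟨rest, h⟩ => (⟨0 :: rest, by
            obtain ⟨h1, h2, h3⟩ := h
            refine ⟨by simp [h1], by simp [h2], ?_⟩
            rw [List.countP_cons]
            simp [h3]⟩ : {s : List ℕ // CntCond (v + 1) t (i + 1) s})
        | .inr ⟨y, ⟨rest, h⟩⟩ => ⟨(y.1 + 1) :: rest, by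
            obtain ⟨h1, h2, h3⟩ := h
            have hy := y.2
            refine ⟨by simp [h1], ?_, ?_⟩
            · show y.1 + 1 + rest.sum = t
              rw [h2]
              omega
            · rw [List.countP_cons]
              simp [h3]⟩)) := by
    constructor
    · rintro (⟨r, hr⟩ | ⟨y, r, hr⟩) (⟨r', hr'⟩ | ⟨y', r', hr'⟩) h <;>
        simp only [Subtype.mk.injEq] at h
      · have := (List.cons.inj h).2
        subst this
        rfl
      · exact absurd (List.cons.inj h).1 (by omega)
      · exact absurd (List.cons.inj h).1 (by omega)
      · obtain ⟨hy, hr⟩ := List.cons.inj h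
        have hyy : y = y' := Fin.ext (by omega)
        subst hyy
        subst hr
        rfl
    · rintro ⟨s, h1, h2, h3⟩
      obtain ⟨x, rest, rfl⟩ : ∃ x rest, s = x :: rest := by
        cases s with
        | nil => simp at h1
        | cons a b => exact ⟨a, b, rfl⟩
      simp only [List.length_cons] at h1
      simp only [List.sum_cons] at h2
      rw [List.countP_cons] at h3
      cases x with
      | zero =>
        have h3' : rest.countP (fun c => c != 0) = i + 1 := by simpa using h3
        refine ⟨.inl ⟨rest, by omega, by omega, h3'⟩, rfl⟩
      | succ y =>
        have hyt : y < t := by omega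
        have h3' : rest.countP (fun c => c != 0) = i := by
          have : ((y + 1 : ℕ) != 0) = true := by simp
          rw [this] at h3
          simp at h3
          omega
        refine ⟨.inr ⟨⟨y, hyt⟩, ⟨rest, by omega, by show rest.sum = t - (y + 1); omega, h3'⟩⟩, rfl⟩
  rw [← Nat.card_congr (Equiv.ofBijective _ Ψbij), Nat.card_sum, nat_card_sigma]

theorem sum_fin_shift (t : ℕ) (f : ℕ → ℕ) :
    ∑ y : Fin t, f (t - (y.1 + 1)) = ∑ u ∈ Finset.range t, f u := by
  rw [Fin.sum_univ_eq_sum_range (fun y => f (t - (y + 1)))]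
  rw [← Finset.sum_range_reflect f t]
  apply Finset.sum_congr rfl
  intro x hx
  congr 1
  rw [Finset.mem_range] at hx
  omega

theorem cnt_card (v : ℕ) : ∀ t i, Nat.card {s : List ℕ // CntCond v t (i + 1) s} =
    (if t = 0 then 0 else v.choose (i + 1) * (t - 1).choose i) := by
  induction v with
  | zero =>
    intro t i
    haveI : IsEmpty {s : List ℕ // CntCond 0 t (i + 1) s} := by
      refine ⟨?_⟩
      rintro ⟨s, h1, h2, h3⟩
      rw [List.length_eq_zero_iff] at h1
      subst h1
      rw [List.countP_nil] at h3
      omega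
    rw [Nat.card_of_isEmpty]
    rw [Nat.choose_eq_zero_of_lt (by omega)]
    simp
  | succ v ih =>
    intro t i
    rw [cnt_decomp]
    cases i with
    | zero =>
      have hfib : ∀ y : Fin t, Nat.card {s : List ℕ // CntCond v (t - (y.1 + 1)) 0 s} =
          (if t - (y.1 + 1) = 0 then 1 else 0) := fun y => cnt_card_zero _ _
      rw [Finset.sum_congr rfl (fun y _ => hfib y),
        sum_fin_shift t (fun u => if u = 0 then 1 else 0), ih t 0]
      rcases Nat.eq_zero_or_pos t with ht | ht
      · subst ht; simp
      · obtain ⟨m, rfl⟩ : ∃ m, t = m + 1 := ⟨t - 1, by omega⟩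
        rw [Finset.sum_range_succ']
        simp only [Nat.add_eq_zero, Nat.succ_ne_zero, and_false, if_false,
          if_neg (Nat.succ_ne_zero m), if_pos rfl, Finset.sum_const_zero]
        rw [Nat.choose_one_right, Nat.choose_one_right]
        simp
    | succ j =>
      have hfib : ∀ y : Fin t, Nat.card {s : List ℕ // CntCond v (t - (y.1 + 1)) (j + 1) s} =
          (if t - (y.1 + 1) = 0 then 0 else v.choose (j + 1) * (t - (y.1 + 1) - 1).choose j) :=
        fun y => ih _ j
      rw [Finset.sum_congr rfl (fun y _ => hfib y),
        sum_fin_shift t (fun u => if u = 0 then 0 else v.choose (j + 1) * (u - 1).choose j),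
        ih t (j + 1)]
      rcases Nat.eq_zero_or_pos t with ht | ht
      · subst ht; simp
      · obtain ⟨m, rfl⟩ : ∃ m, t = m + 1 := ⟨t - 1, by omega⟩
        rw [Finset.sum_range_succ']
        simp only [Nat.add_eq_zero, Nat.succ_ne_zero, and_false, if_false,
          if_neg (Nat.succ_ne_zero m), if_pos rfl, Nat.add_zero, Nat.add_sub_cancel]
        have hsum : ∑ u ∈ Finset.range m, v.choose (j + 1) * u.choose j
            = v.choose (j + 1) * m.choose (j + 1) := by
          rw [← Finset.mul_sum, hockey]
        rw [hsum, Nat.choose_succ_succ' v (j + 1)]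
        simp
        ring

theorem binom_id (t k : ℕ) (ht : 1 ≤ t) (hk : 1 ≤ k) :
    k * ((t + 1).choose (k + 1) * (t - 1).choose k) =
      (t + 1) * (t.choose (k + 1) * (t - 1).choose (k - 1)) := by
  by_cases h : t ≤ k
  · rw [Nat.choose_eq_zero_of_lt (show t - 1 < k by omega),
      Nat.choose_eq_zero_of_lt (show t < k + 1 by omega)]
    simp
  · push_neg at h
    obtain ⟨e, rfl⟩ : ∃ e, k = e + 1 := ⟨k - 1, by omega⟩
    obtain ⟨d, rfl⟩ : ∃ d, t = (e + 1) + d + 1 := ⟨t - (e + 1) - 1, by omega⟩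
    simp only [show (e + 1) + d + 1 + 1 = e + d + 3 by omega, show (e + 1) + d + 1 - 1 = e + d + 1 by omega,
      show (e + 1) + d + 1 = e + d + 2 by omega, Nat.add_sub_cancel]
    have hfac : ∀ a : ℕ, ((a.factorial : ℚ)) ≠ 0 := fun a => by
      exact_mod_cast a.factorial_ne_zero
    have c1 : ((e + d + 3).choose (e + 2) : ℚ) =
        (e + d + 3).factorial / ((e + 2).factorial * (d + 1).factorial) := by
      rw [Nat.cast_choose ℚ (by omega), show e + d + 3 - (e + 2) = d + 1 from by omega]
    have c2 : ((e + d + 1).choose (e + 1) : ℚ) =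
        (e + d + 1).factorial / ((e + 1).factorial * d.factorial) := by
      rw [Nat.cast_choose ℚ (by omega), show e + d + 1 - (e + 1) = d from by omega]
    have c3 : ((e + d + 2).choose (e + 2) : ℚ) =
        (e + d + 2).factorial / ((e + 2).factorial * d.factorial) := by
      rw [Nat.cast_choose ℚ (by omega), show e + d + 2 - (e + 2) = d from by omega]
    have c4 : ((e + d + 1).choose e : ℚ) =
        (e + d + 1).factorial / (e.factorial * (d + 1).factorial) := by
      rw [Nat.cast_choose ℚ (by omega), show e + d + 1 - e = d + 1 from by omega]
    have goalQ : ((e + 1 : ℕ) : ℚ) * ((e + d + 3).choose (e + 2) * (e + d + 1).choose (e + 1)) =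
        ((e + d + 3 : ℕ) : ℚ) * ((e + d + 2).choose (e + 2) * (e + d + 1).choose e) := by
      rw [c1, c2, c3, c4]
      have f1 : ((e + d + 3).factorial : ℚ) = (e + d + 3) * (e + d + 2).factorial := by
        rw [show e + d + 3 = (e + d + 2) + 1 by omega, Nat.factorial_succ]
        push_cast
        ring
      have f2 : ((e + 1).factorial : ℚ) = (e + 1) * e.factorial := by
        rw [Nat.factorial_succ]
        push_cast
        ring
      have f3 : ((d + 1).factorial : ℚ) = (d + 1) * d.factorial := by
        rw [Nat.factorial_succ]
        push_cast
        ring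
      rw [f1, f2, f3]
      field_simp
      push_cast; ring
    have := goalQ
    push_cast at this
    exact_mod_cast (by push_cast; linarith : ((e + 1) * ((e + d + 3).choose (e + 2) * (e + d + 1).choose (e + 1)) : ℚ) = ((e + d + 3) * ((e + d + 2).choose (e + 2) * (e + d + 1).choose e) : ℚ))

theorem stmt12 (n k : ℕ) (hn : 1 ≤ n) (hk : 1 ≤ k) :
    Nonempty
      ({A : Finset (ℕ × ℕ) // IsStack n A ∧ A.card = k} ≃
        {T : PlaneTree // T.size = n - k + 1 ∧ T.internal = k + 1}) ∧
    k * Nat.card {A : Finset (ℕ × ℕ) // IsStack n A ∧ A.card = k} =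
      (n - k).choose (k + 1) * (n - k - 1).choose (k - 1) := by
  have hv1 : 1 ≤ n - k + 1 := by omega
  have e1 : Nat.card {A : Finset (ℕ × ℕ) // IsStack n A ∧ A.card = k} =
      Nat.card {s : List ℕ // SeqCond (n - k + 1) (k + 1) s} :=
    Nat.card_congr ((stackEquiv n k).symm.trans
      ((forestTreeEquiv n k hn hk).trans (treeSeqEquiv (n - k + 1) (k + 1))))
  have e2 : Nat.card {s : List ℕ // SeqCond (n - k + 1) (k + 1) s} * (n - k + 1) =
      Nat.card {s : List ℕ // AllCond (n - k + 1) (k + 1) s} := by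
    rw [← Nat.card_congr (cycleEquiv (n - k + 1) (k + 1) hv1), Nat.card_prod]
    simp [Nat.card_eq_fintype_card]
  have e3 : Nat.card {s : List ℕ // AllCond (n - k + 1) (k + 1) s} =
      Nat.card {s : List ℕ // CntCond (n - k + 1) (n - k) (k + 1) s} :=
    Nat.card_congr (Equiv.subtypeEquivRight (fun s => by
      unfold AllCond CntCond
      constructor
      · rintro ⟨a, b, c⟩
        exact ⟨a, by omega, c⟩
      · rintro ⟨a, b, c⟩
        exact ⟨a, by omega, c⟩))
  have e4 := cnt_card (n - k + 1) (n - k) k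
  refine ⟨⟨(stackEquiv n k).symm.trans (forestTreeEquiv n k hn hk)⟩, ?_⟩
  by_cases hnk : n ≤ k
  · have ht0 : n - k = 0 := by omega
    rw [ht0, if_pos rfl] at e4
    rw [ht0] at e2 e3
    rw [e1, ht0]
    rw [Nat.choose_eq_zero_of_lt (show 0 < k + 1 by omega)]
    have : Nat.card {s : List ℕ // SeqCond (0 + 1) (k + 1) s} = 0 := by omega
    rw [this]
    simp
  · have ht1 : 1 ≤ n - k := by omega
    rw [if_neg (by omega)] at e4
    have key := binom_id (n - k) k ht1 hk
    apply Nat.eq_of_mul_eq_mul_right (show 0 < n - k + 1 by omega)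
    calc k * Nat.card {A : Finset (ℕ × ℕ) // IsStack n A ∧ A.card = k} * (n - k + 1)
        = k * (Nat.card {s : List ℕ // SeqCond (n - k + 1) (k + 1) s} * (n - k + 1)) := by
          rw [e1]; ring
      _ = k * ((n - k + 1).choose (k + 1) * (n - k - 1).choose k) := by
          rw [e2, e3, e4]
      _ = (n - k + 1) * ((n - k).choose (k + 1) * (n - k - 1).choose (k - 1)) := key
      _ = (n - k).choose (k + 1) * (n - k - 1).choose (k - 1) * (n - k + 1) := by ring
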